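/- arXiv:2406.07554 — 2 statements merged into one kernel-verified Lean document; each statement's English description precedes it below -/
import Mathlib

section
/- Let g be a centerless Lie 2-algebra with MT(g) = 3, standard maximal torus t with toral basis {t1, t2, t3} and dual basis {α, β, γ} of t*, whose t-root set is Δ = {α, β, γ, α+β, α+γ, β+γ, α+β+γ}. Assume dim(g_α) = dim(g_β) = dim(g_{α+β}) ≥ dim(g_γ) ≥ dim(g_{α+γ}) and dim(g_{α+γ}) > dim(g_{β+γ}) = dim(g_{α+β+γ}). Then I := span{t2, t3} ⊕ n ⊕ ⊕_{ξ∈Δ} g_ξ is an ideal of g. -/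
/-- A 2-map on a Lie algebra over the field `F` (char 2 version of a restricted structure):
`(c • x)^[2] = c^2 • x^[2]`, `ad (x^[2]) = (ad x) ∘ (ad x)` and
`(x+y)^[2] = x^[2] + y^[2] + [x,y]`. -/
structure IsTwoMap (F : Type*) [Field F] {g : Type*} [LieRing g] [LieAlgebra F g]
    (p : g → g) : Prop where
  smul_pow : ∀ (c : F) (x : g), p (c • x) = (c ^ 2) • p x
  ad_pow : ∀ x y : g, ⁅p x, y⁆ = ⁅x, ⁅x, y⁆⁆
  add_pow : ∀ x y : g, p (x + y) = p x + p y + ⁅x, y⁆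

/-- An element is 2-nilpotent if some iterate of the 2-map annihilates it. -/
def IsTwoNilpotent {g : Type*} [Zero g] (p : g → g) (x : g) : Prop :=
  ∃ k : ℕ, p^[k] x = 0

/-- A torus of a Lie 2-algebra: a Lie subalgebra closed under the 2-map on which the
2-map is invertible (bijective). -/
def IsTorus (F : Type*) [Field F] {g : Type*} [LieRing g] [LieAlgebra F g]
    (p : g → g) (t : LieSubalgebra F g) : Prop :=
  (∀ x ∈ t, p x ∈ t) ∧ Set.BijOn p (t : Set g) (t : Set g)

/-- A maximal torus of a Lie 2-algebra. -/
def IsMaxTorus (F : Type*) [Field F] {g : Type*} [LieRing g] [LieAlgebra F g]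
    (p : g → g) (t : LieSubalgebra F g) : Prop :=
  IsTorus F p t ∧ ∀ s : LieSubalgebra F g, IsTorus F p s → t ≤ s → s = t

/-- The weight (root) space of a linear functional `lam` on a torus `t`:
`g_lam = {v | [x, v] = lam x • v for all x ∈ t}`. -/
def rootSpace {F : Type*} [Field F] {g : Type*} [LieRing g] [LieAlgebra F g]
    (t : LieSubalgebra F g) (lam : Module.Dual F t) : Submodule F g where
  carrier := {v | ∀ x : t, ⁅(x : g), v⁆ = lam x • v}
  add_mem' := by
    intro a b ha hb x
    rw [lie_add, ha x, hb x, smul_add]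
  zero_mem' := by
    intro x
    rw [lie_zero, smul_zero]
  smul_mem' := by
    intro c v hv x
    rw [lie_smul, hv x, smul_comm]

/-- The set of `t`-roots: nonzero functionals with nonzero root space. -/
def rootSet {F : Type*} [Field F] {g : Type*} [LieRing g] [LieAlgebra F g]
    (t : LieSubalgebra F g) : Set (Module.Dual F t) :=
  {lam | lam ≠ 0 ∧ rootSpace t lam ≠ ⊥}

/-- The subspace `N(σ, δ) = {x ∈ g_σ : [x, g_σ] ⊆ n and [[x, g_δ], g_{σ+δ}] ⊆ n}`,
given as `Nspace n g_σ g_δ g_{σ+δ}`. -/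
def Nspace {F : Type*} [Field F] {g : Type*} [LieRing g] [LieAlgebra F g]
    (n gs gd gsd : Submodule F g) : Submodule F g where
  carrier := {x | x ∈ gs ∧ (∀ y ∈ gs, ⁅x, y⁆ ∈ n) ∧ ∀ z ∈ gd, ∀ w ∈ gsd, ⁅⁅x, z⁆, w⁆ ∈ n}
  add_mem' := by
    intro a b ha hb
    obtain ⟨ha1, ha2, ha3⟩ := ha
    obtain ⟨hb1, hb2, hb3⟩ := hb
    refine ⟨gs.add_mem ha1 hb1, fun y hy => ?_, fun z hz w hw => ?_⟩
    · rw [add_lie]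
      exact n.add_mem (ha2 y hy) (hb2 y hy)
    · rw [add_lie, add_lie]
      exact n.add_mem (ha3 z hz w hw) (hb3 z hz w hw)
  zero_mem' := by
    refine ⟨gs.zero_mem, fun y hy => ?_, fun z hz w hw => ?_⟩
    · rw [zero_lie]; exact n.zero_mem
    · rw [zero_lie, zero_lie]; exact n.zero_mem
  smul_mem' := by
    intro c x hx
    obtain ⟨h1, h2, h3⟩ := hx
    refine ⟨gs.smul_mem c h1, fun y hy => ?_, fun z hz w hw => ?_⟩
    · rw [smul_lie]; exact n.smul_mem c (h2 y hy)
    · rw [smul_lie, smul_lie]; exact n.smul_mem c (h3 z hz w hw)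

/-!
The commuting idempotents `ad tᵢ` split `g` into the weight spaces `g_μ`. For `w ∈ g_μ` and
`y ∈ I`, weights (with `⁅g_0, n⁆ ⊆ n`) put `⁅w, y⁆` in `I`, except when `y ∈ g_ξ` with
`μ + ξ = 0`. In characteristic two this means `ξ = μ`, and then
`⁅w, y⁆ = (w + y)^[2] - w^[2] - y^[2]`, so it suffices that
`z^[2] ∈ span {t₂, t₃} ⊕ n` for every root vector `z ∈ g_λ`.

Since `g` is centerless, `z^[2] ∈ g_{2λ} = g_0 = t ⊕ n`, say `z^[2] = τ + ν` with `ν`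
2-nilpotent, so `(ad z)² = ad τ + ad ν` acts on `g_μ` as `μ(τ)` plus a nilpotent map. Hence
`μ(τ) ≠ 0` makes `ad z : g_μ → g_{λ+μ}` injective, which the dimension hypotheses forbid for
suitable `μ`; this gives `α(τ) = 0` for every root `λ ≠ α`. For `λ = α`, `ad z` exchanges `g_α`
and `g_0`, where `(ad z)²` is nilpotent, so `α(τ) ≠ 0` would make `(ad z)²` both injective and
nilpotent on `g_α ≠ 0`.
-/

lemma Module.End.mem_span_common_eigenvectors {F M : Type*} [Field F] [AddCommGroup M]
    [Module F M] (L : List (Module.End F M)) (hidem : ∀ e ∈ L, IsIdempotentElem e)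
    (hcomm : ∀ e ∈ L, ∀ e' ∈ L, Commute e e') (v : M) :
    v ∈ Submodule.span F {w | ∀ e ∈ L, ∃ c : F, e w = c • w} := by
  induction L generalizing v with
  | nil => exact Submodule.subset_span fun e he => absurd he List.not_mem_nil
  | cons e₀ L ih =>
    have he₀ : e₀ * e₀ = e₀ := (hidem e₀ List.mem_cons_self).eq
    have hcomm₀ : ∀ e ∈ L, e₀ * e = e * e₀ := fun e he =>
      (hcomm e₀ List.mem_cons_self e (List.mem_cons_of_mem _ he)).eq
    refine Submodule.span_le.mpr (fun w hw => ?_)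
      (ih (fun e he => hidem e (List.mem_cons_of_mem _ he))
        (fun e he e' he' => hcomm e (List.mem_cons_of_mem _ he) e' (List.mem_cons_of_mem _ he')) v)
    rw [← add_sub_cancel (e₀ w) w]
    refine Submodule.add_mem _ (Submodule.subset_span ?_) (Submodule.subset_span ?_)
    · rintro e (_ | ⟨_, he⟩)
      · exact ⟨1, by rw [one_smul, ← Module.End.mul_apply, he₀]⟩
      · obtain ⟨c, hc⟩ := hw e he
        exact ⟨c, by rw [← Module.End.mul_apply, ← hcomm₀ e he, Module.End.mul_apply, hc,
          map_smul]⟩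
    · rintro e (_ | ⟨_, he⟩)
      · exact ⟨0, by rw [zero_smul, map_sub, ← Module.End.mul_apply, he₀, sub_self]⟩
      · obtain ⟨c, hc⟩ := hw e he
        exact ⟨c, by rw [map_sub, ← Module.End.mul_apply, ← hcomm₀ e he, Module.End.mul_apply,
          hc, map_smul, smul_sub]⟩

lemma LieAlgebra.commute_ad_of_lie_eq_zero {R L : Type*} [CommRing R] [LieRing L]
    [LieAlgebra R L] {x y : L} (h : ⁅x, y⁆ = 0) :
    Commute (LieAlgebra.ad R L x) (LieAlgebra.ad R L y) := by
  ext v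
  simp only [Module.End.mul_apply, LieAlgebra.ad_apply]
  rw [leibniz_lie, h, zero_lie, zero_add]

lemma Module.Dual.add_self_eq_zero {F V : Type*} [Field F] [CharP F 2] [AddCommGroup V]
    [Module F V] (mu : Module.Dual F V) : mu + mu = 0 :=
  LinearMap.ext fun v => CharTwo.add_self_eq_zero (mu v)

section RootSpace

variable {F : Type*} [Field F] {g : Type*} [LieRing g] [LieAlgebra F g] {t : LieSubalgebra F g}

lemma mem_rootSpace_of_span_eq_top {S : Set t} (hS : Submodule.span F S = ⊤)
    {lam : Module.Dual F t} {v : g} (h : ∀ s ∈ S, ⁅(s : g), v⁆ = lam s • v) :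
    v ∈ rootSpace t lam := by
  intro x
  have hx : x ∈ Submodule.span F S := hS ▸ Submodule.mem_top
  induction hx using Submodule.span_induction with
  | mem s hs => exact h s hs
  | zero => simp
  | add x y _ _ hx hy =>
    rw [show ((x + y : t) : g) = x + y from rfl, add_lie, hx, hy, map_add, add_smul]
  | smul c x _ hx =>
    rw [show ((c • x : t) : g) = c • (x : g) from rfl, smul_lie, hx, map_smul, smul_eq_mul,
      mul_smul]

lemma lie_mem_rootSpace_add {lam mu : Module.Dual F t} {z v : g}
    (hz : z ∈ rootSpace t lam) (hv : v ∈ rootSpace t mu) :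
    ⁅z, v⁆ ∈ rootSpace t (lam + mu) := fun x => by
  rw [leibniz_lie, hz x, hv x, smul_lie, lie_smul, LinearMap.add_apply, add_smul]

lemma lie_eq_zero_of_mem_rootSpace_zero {v : g} (hv : v ∈ rootSpace t 0) (x : t) :
    ⁅(x : g), v⁆ = 0 := by
  rw [hv x, LinearMap.zero_apply, zero_smul]

lemma mem_iSup_rootSpace_of_ne_zero {lam : Module.Dual F t} {v : g} (hlam : lam ≠ 0)
    (hv : v ∈ rootSpace t lam) : v ∈ ⨆ ξ ∈ rootSet t, rootSpace t ξ := by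
  by_cases hbot : rootSpace t lam = ⊥
  · rw [hbot, Submodule.mem_bot] at hv
    exact hv ▸ Submodule.zero_mem _
  · exact le_iSup₂ (f := fun ξ _ => rootSpace t ξ) lam ⟨hlam, hbot⟩ hv

lemma coe_mem_span_pair_of_apply_eq_zero {t₁ t₂ t₃ : t}
    (hspan : Submodule.span F ({t₁, t₂, t₃} : Set t) = ⊤) {α : Module.Dual F t}
    (hα : α t₁ = 1 ∧ α t₂ = 0 ∧ α t₃ = 0) {τ : t} (hτ : α τ = 0) :
    (τ : g) ∈ Submodule.span F ({(t₂ : g), (t₃ : g)} : Set g) := by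
  have hτspan : τ ∈ Submodule.span F ({t₁, t₂, t₃} : Set t) := hspan ▸ Submodule.mem_top
  obtain ⟨a, _, hrest, rfl⟩ := Submodule.mem_span_insert.mp hτspan
  obtain ⟨b, c, rfl⟩ := Submodule.mem_span_pair.mp hrest
  obtain rfl : a = 0 := by simpa [hα] using hτ
  exact Submodule.mem_span_pair.mpr ⟨b, c, by simp⟩

end RootSpace

namespace IsTwoMap

variable {F : Type*} [Field F] {g : Type*} [LieRing g] [LieAlgebra F g] {p : g → g}
  {t : LieSubalgebra F g}

lemma ad_apply (hp : IsTwoMap F p) (x : g) :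
    LieAlgebra.ad F g (p x) = LieAlgebra.ad F g x * LieAlgebra.ad F g x := by
  ext y
  exact hp.ad_pow x y

lemma isIdempotentElem_ad (hp : IsTwoMap F p) {s : g} (hs : p s = s) :
    IsIdempotentElem (LieAlgebra.ad F g s) := by
  rw [IsIdempotentElem, ← hp.ad_apply, hs]

lemma isNilpotent_ad (hp : IsTwoMap F p) {v : g} (hv : IsTwoNilpotent p v) :
    IsNilpotent (LieAlgebra.ad F g v) := by
  obtain ⟨k, hk⟩ := hv
  refine ⟨2 ^ k, ?_⟩
  induction k generalizing v with
  | zero => simp_all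
  | succ k ih =>
    rw [pow_succ', pow_mul, sq, ← hp.ad_apply]
    exact ih hk

-- `ad ⁅s, p z⁆ = 2 λ(s) • ad (p z)`, so `⁅s, p z⁆ - 2 λ(s) • p z` is central.
lemma mem_rootSpace_add_self (hp : IsTwoMap F p) (hcenter : LieAlgebra.center F g = ⊥)
    {lam : Module.Dual F t} {z : g} (hz : z ∈ rootSpace t lam) :
    p z ∈ rootSpace t (lam + lam) := by
  intro s
  have hs : ∀ u : g, ⁅(s : g), ⁅z, u⁆⁆ = lam s • ⁅z, u⁆ + ⁅z, ⁅(s : g), u⁆⁆ := fun u => by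
    rw [leibniz_lie, (hz s : ⁅(s : g), z⁆ = lam s • z), smul_lie]
  have hcen : ⁅(s : g), p z⁆ - (lam + lam) s • p z ∈ LieAlgebra.center F g := by
    rw [LieAlgebra.center, LieModule.mem_maxTrivSubmodule]
    intro v
    rw [← lie_skew, neg_eq_zero, sub_lie, lie_lie, smul_lie, hp.ad_pow z v, hp.ad_pow z, hs, hs,
      lie_add, lie_smul, LinearMap.add_apply, add_smul]
    abel
  rwa [hcenter, LieSubmodule.mem_bot, sub_eq_zero] at hcen

variable {z ν : g} {τ : t}

lemma eq_zero_of_lie_lie_eq_zero (hp : IsTwoMap F p) (hpz : p z = τ + ν)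
    (hν : IsNilpotent (LieAlgebra.ad F g ν)) {mu : Module.Dual F t} (hmu : mu τ ≠ 0) {u : g}
    (hu : u ∈ rootSpace t mu) (h : ⁅z, ⁅z, u⁆⁆ = 0) : u = 0 := by
  have hunit : IsUnit (algebraMap F (Module.End F g) (mu τ) + LieAlgebra.ad F g ν) :=
    hν.isUnit_add_left_of_commute ((isUnit_iff_ne_zero.mpr hmu).map _)
      (Algebra.commutes _ _).symm
  apply (Module.End.isUnit_iff _).mp hunit |>.injective
  rw [map_zero, ← h, ← hp.ad_pow, hpz, add_lie, hu τ]
  rfl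

lemma apply_eq_zero_of_finrank_lt [FiniteDimensional F g] (hp : IsTwoMap F p)
    {lam mu : Module.Dual F t} (hz : z ∈ rootSpace t lam) (hpz : p z = τ + ν)
    (hν : IsNilpotent (LieAlgebra.ad F g ν))
    (hlt : Module.finrank F (rootSpace t (lam + mu)) < Module.finrank F (rootSpace t mu)) :
    mu τ = 0 := by
  by_contra hmu
  let A : rootSpace t mu →ₗ[F] rootSpace t (lam + mu) :=
    (LieAlgebra.ad F g z).restrict fun _ hu => lie_mem_rootSpace_add hz hu
  have hA : Function.Injective A := by
    refine (injective_iff_map_eq_zero A).mpr fun u hu => Subtype.ext ?_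
    have hzu : ⁅z, (u : g)⁆ = 0 := congrArg Subtype.val hu
    exact eq_zero_of_lie_lie_eq_zero hp hpz hν hmu u.2 (by rw [hzu, lie_zero])
  exact not_le_of_gt hlt (LinearMap.finrank_le_finrank_of_injective hA)

lemma apply_self_eq_zero (hp : IsTwoMap F p) {lam : Module.Dual F t} (hz : z ∈ rootSpace t lam)
    (hlam : lam + lam = 0) (hne : rootSpace t lam ≠ ⊥) (hpz : p z = τ + ν)
    (hν0 : ν ∈ rootSpace t 0) (hν : IsNilpotent (LieAlgebra.ad F g ν)) : lam τ = 0 := by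
  by_contra hc
  set Z := LieAlgebra.ad F g z
  have hZZ : ∀ v, (Z * Z) v = ⁅p z, v⁆ := fun v => (hp.ad_pow z v).symm
  have hnil_zero : ∀ k, ∀ w ∈ rootSpace t 0, ((Z * Z) ^ k) w = (LieAlgebra.ad F g ν ^ k) w := by
    intro k
    induction k with
    | zero => simp
    | succ k ih =>
      intro w hw
      have hνw : ⁅ν, w⁆ ∈ rootSpace t 0 := by simpa using lie_mem_rootSpace_add hν0 hw
      rw [pow_succ, Module.End.mul_apply, hZZ, hpz, add_lie, lie_eq_zero_of_mem_rootSpace_zero hw,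
        zero_add, ih _ hνw, pow_succ, Module.End.mul_apply, LieAlgebra.ad_apply]
  have hinj_lam : ∀ k, ∀ u ∈ rootSpace t lam, ((Z * Z) ^ k) u = 0 → u = 0 := by
    intro k
    induction k with
    | zero => simp
    | succ k ih =>
      intro u hu h
      have hZZu : ⁅z, ⁅z, u⁆⁆ ∈ rootSpace t lam := by
        simpa [hlam] using lie_mem_rootSpace_add hz (lie_mem_rootSpace_add hz hu)
      rw [pow_succ, Module.End.mul_apply] at h
      exact eq_zero_of_lie_lie_eq_zero hp hpz hν hc hu (ih _ hZZu h)
  obtain ⟨m, hm⟩ := hν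
  obtain ⟨u, hu, hu0⟩ := Submodule.exists_mem_ne_zero_of_ne_bot hne
  have hZu : ⁅z, u⁆ ∈ rootSpace t 0 := by simpa [hlam] using lie_mem_rootSpace_add hz hu
  have hpow : (Z * Z) ^ (m + 1) = Z * (Z * Z) ^ m * Z := by
    rw [pow_succ', mul_assoc, mul_assoc, (((Commute.refl Z).mul_right (.refl Z)).pow_right m).eq]
  refine hu0 (hinj_lam (m + 1) u hu ?_)
  rw [hpow, Module.End.mul_apply, Module.End.mul_apply, hnil_zero m (Z u) hZu, hm,
    LinearMap.zero_apply, map_zero]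

end IsTwoMap

section WeightDecomposition

variable {F : Type*} [Field F] {g : Type*} [LieRing g] [LieAlgebra F g] {p : g → g}
  {t : LieSubalgebra F g}

lemma mem_iSup_rootSpace (hp : IsTwoMap F p) (ht : ∀ s s' : t, ⁅(s : g), (s' : g)⁆ = 0)
    {t₁ t₂ t₃ : t} (htor1 : p (t₁ : g) = (t₁ : g)) (htor2 : p (t₂ : g) = (t₂ : g))
    (htor3 : p (t₃ : g) = (t₃ : g)) (hspan : Submodule.span F ({t₁, t₂, t₃} : Set t) = ⊤)
    {α β γ : Module.Dual F t} (hα : α t₁ = 1 ∧ α t₂ = 0 ∧ α t₃ = 0)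
    (hβ : β t₁ = 0 ∧ β t₂ = 1 ∧ β t₃ = 0) (hγ : γ t₁ = 0 ∧ γ t₂ = 0 ∧ γ t₃ = 1) (x : g) :
    x ∈ ⨆ mu, rootSpace t mu := by
  let L := [t₁, t₂, t₃].map fun s : t => LieAlgebra.ad F g s
  have hidem : ∀ e ∈ L, IsIdempotentElem e := by
    simp only [L, List.map_cons, List.map_nil, List.mem_cons, List.not_mem_nil, or_false]
    rintro e (rfl | rfl | rfl)
    exacts [hp.isIdempotentElem_ad htor1, hp.isIdempotentElem_ad htor2,
      hp.isIdempotentElem_ad htor3]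
  have hcomm : ∀ e ∈ L, ∀ e' ∈ L, Commute e e' := by
    simp only [L, List.mem_map]
    rintro _ ⟨s, -, rfl⟩ _ ⟨s', -, rfl⟩
    exact LieAlgebra.commute_ad_of_lie_eq_zero (ht s s')
  refine Submodule.span_le.mpr (fun w hw => ?_)
    (Module.End.mem_span_common_eigenvectors L hidem hcomm x)
  obtain ⟨c₁, hc₁⟩ := hw _ (List.mem_map_of_mem (List.mem_cons_self))
  obtain ⟨c₂, hc₂⟩ := hw _ (List.mem_map_of_mem (List.mem_cons_of_mem _ List.mem_cons_self))
  obtain ⟨c₃, hc₃⟩ := hw _ (List.mem_map_of_mem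
    (List.mem_cons_of_mem _ (List.mem_cons_of_mem _ List.mem_cons_self)))
  refine Submodule.mem_iSup_of_mem (c₁ • α + c₂ • β + c₃ • γ)
    (mem_rootSpace_of_span_eq_top hspan ?_)
  rintro s (rfl | rfl | rfl)
  · simpa [hα, hβ, hγ] using hc₁
  · simpa [hα, hβ, hγ] using hc₂
  · simpa [hα, hβ, hγ] using hc₃

end WeightDecomposition

section CharTwo

variable {F : Type*} [Field F] [CharP F 2] {g : Type*} [LieRing g] [LieAlgebra F g]
  {t : LieSubalgebra F g}

lemma lie_mem_of_mem_rootSpace {p : g → g} (hp : IsTwoMap F p) {n J : Submodule F g}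
    (hJ : J ≤ t.toSubmodule) (hn0 : n ≤ rootSpace t 0)
    (hstd : ∀ x ∈ rootSpace t 0, ∀ y ∈ n, ⁅x, y⁆ ∈ n)
    (hpJ : ∀ ξ ∈ rootSet t, ∀ z ∈ rootSpace t ξ, p z ∈ J ⊔ n)
    {mu : Module.Dual F t} {w y : g} (hw : w ∈ rootSpace t mu)
    (hy : y ∈ J ⊔ n ⊔ ⨆ ξ ∈ rootSet t, rootSpace t ξ) :
    ⁅w, y⁆ ∈ J ⊔ n ⊔ ⨆ ξ ∈ rootSet t, rootSpace t ξ := by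
  set I := J ⊔ n ⊔ ⨆ ξ ∈ rootSet t, rootSpace t ξ
  have hJI : J ⊔ n ≤ I := le_sup_left
  have hroot : ∀ {lam : Module.Dual F t}, lam ≠ 0 → ∀ v ∈ rootSpace t lam, v ∈ I :=
    fun hlam _ hv => le_sup_right (a := J ⊔ n) (mem_iSup_rootSpace_of_ne_zero hlam hv)
  suffices I ≤ I.comap (LieAlgebra.ad F g w) from this hy
  refine sup_le (sup_le (fun j hj => ?_) (fun v hv => ?_)) (iSup₂_le fun ξ hξ v hv => ?_)
  · have hwj : ⁅w, j⁆ = -(mu ⟨j, hJ hj⟩ • w) := by rw [← lie_skew, hw ⟨j, hJ hj⟩]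
    show ⁅w, j⁆ ∈ I
    by_cases hmu : mu = 0
    · simp [hwj, hmu]
    · exact hwj ▸ I.neg_mem (I.smul_mem _ (hroot hmu w hw))
  · show ⁅w, v⁆ ∈ I
    by_cases hmu : mu = 0
    · exact hJI (Submodule.mem_sup_right (hstd w (hmu ▸ hw) v hv))
    · exact hroot hmu _ (by simpa using lie_mem_rootSpace_add hw (hn0 hv))
  · show ⁅w, v⁆ ∈ I
    by_cases hsum : mu + ξ = 0
    · -- in characteristic two `ξ = mu`, so `w`, `v` and `w + v` all lie in one root space
      obtain rfl : mu = ξ := by rwa [← mu.add_self_eq_zero, add_right_inj, eq_comm] at hsum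
      have hwv : ⁅w, v⁆ = p (w + v) - p w - p v := by rw [hp.add_pow]; abel
      exact hwv ▸ hJI (sub_mem (sub_mem (hpJ mu hξ _ (add_mem hw hv)) (hpJ mu hξ w hw))
        (hpJ mu hξ v hv))
    · exact hroot hsum _ (lie_mem_rootSpace_add hw hv)

lemma apply_eq_zero_of_forall_finrank_lt {α β γ : Module.Dual F t}
    (hroots : rootSet t = ({α, β, γ, α + β, α + γ, β + γ, α + β + γ} :
      Set (Module.Dual F t)))
    (h1 : Module.finrank F (rootSpace t α) = Module.finrank F (rootSpace t β))
    (h2 : Module.finrank F (rootSpace t β) = Module.finrank F (rootSpace t (α + β)))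
    (h3 : Module.finrank F (rootSpace t γ) ≤ Module.finrank F (rootSpace t (α + β)))
    (h4 : Module.finrank F (rootSpace t (α + γ)) ≤ Module.finrank F (rootSpace t γ))
    (h5 : Module.finrank F (rootSpace t (β + γ)) <
      Module.finrank F (rootSpace t (α + γ)))
    (h6 : Module.finrank F (rootSpace t (β + γ)) =
      Module.finrank F (rootSpace t (α + β + γ)))
    {lam : Module.Dual F t} (hlam : lam ∈ rootSet t) {τ : t} (hself : lam τ = 0)
    (hlt : ∀ mu, Module.finrank F (rootSpace t (lam + mu)) < Module.finrank F (rootSpace t mu) →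
      mu τ = 0) :
    α τ = 0 := by
  have key : ∀ mu nu, lam + mu = nu →
      Module.finrank F (rootSpace t nu) < Module.finrank F (rootSpace t mu) → mu τ = 0 := by
    rintro mu _ rfl
    exact hlt mu
  have hαα := α.add_self_eq_zero
  rw [hroots] at hlam
  simp only [Set.mem_insert_iff, Set.mem_singleton_iff] at hlam
  rcases hlam with h | h | h | h | h | h | h <;> rw [h] at key hself
  · exact hself
  · have hγ := key γ (β + γ) rfl (by omega)
    have hαγ := key (α + γ) (α + β + γ) (by abel) (by omega)
    rw [LinearMap.add_apply] at hαγ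
    linear_combination hαγ - hγ
  · have hβ := key β (β + γ) (by abel) (by omega)
    have hαβ := key (α + β) (α + β + γ) (by abel) (by omega)
    rw [LinearMap.add_apply] at hαβ
    linear_combination hαβ - hβ
  · have hγ := key γ (α + β + γ) rfl (by omega)
    have hαγ := key (α + γ) (β + γ) (by linear_combination (norm := module) hαα) (by omega)
    rw [LinearMap.add_apply] at hαγ
    linear_combination hαγ - hγ
  · have hβ := key β (α + β + γ) (by abel) (by omega)
    have hαβ := key (α + β) (β + γ) (by linear_combination (norm := module) hαα) (by omega)
    rw [LinearMap.add_apply] at hαβ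
    linear_combination hαβ - hβ
  · exact key α (α + β + γ) (by abel) (by omega)
  · exact key α (β + γ) (by linear_combination (norm := module) hαα) (by omega)

end CharTwo

theorem statement13_general
    {F : Type*} [Field F] [CharP F 2]
    {g : Type*} [LieRing g] [LieAlgebra F g] [FiniteDimensional F g]
    (p : g → g) (hp : IsTwoMap F p)
    (hcenter : LieAlgebra.center F g = ⊥)
    (t : LieSubalgebra F g)
    (n : Submodule F g)
    (hn : ∀ x : g, x ∈ n ↔ x ∈ rootSpace t 0 ∧ IsTwoNilpotent p x)
    (hstd : ∀ x ∈ rootSpace t 0, ∀ y ∈ n, ⁅x, y⁆ ∈ n)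
    (hdecomp : rootSpace t 0 = t.toSubmodule ⊔ n)
    (t₁ t₂ t₃ : t)
    (htor1 : p (t₁ : g) = (t₁ : g)) (htor2 : p (t₂ : g) = (t₂ : g))
    (htor3 : p (t₃ : g) = (t₃ : g))
    (hspan : Submodule.span F ({t₁, t₂, t₃} : Set t) = ⊤)
    (α β γ : Module.Dual F t)
    (hα : α t₁ = 1 ∧ α t₂ = 0 ∧ α t₃ = 0)
    (hβ : β t₁ = 0 ∧ β t₂ = 1 ∧ β t₃ = 0)
    (hγ : γ t₁ = 0 ∧ γ t₂ = 0 ∧ γ t₃ = 1)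
    (hroots : rootSet t = ({α, β, γ, α + β, α + γ, β + γ, α + β + γ} :
      Set (Module.Dual F t)))
    (h1 : Module.finrank F (rootSpace t α) = Module.finrank F (rootSpace t β))
    (h2 : Module.finrank F (rootSpace t β) = Module.finrank F (rootSpace t (α + β)))
    (h3 : Module.finrank F (rootSpace t γ) ≤ Module.finrank F (rootSpace t (α + β)))
    (h4 : Module.finrank F (rootSpace t (α + γ)) ≤ Module.finrank F (rootSpace t γ))
    (h5 : Module.finrank F (rootSpace t (β + γ)) <
      Module.finrank F (rootSpace t (α + γ)))
    (h6 : Module.finrank F (rootSpace t (β + γ)) =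
      Module.finrank F (rootSpace t (α + β + γ))) :
    ∀ x y : g,
      y ∈ Submodule.span F ({(t₂ : g), (t₃ : g)} : Set g) ⊔ n ⊔
          (⨆ ξ ∈ rootSet t, rootSpace t ξ) →
      ⁅x, y⁆ ∈ Submodule.span F ({(t₂ : g), (t₃ : g)} : Set g) ⊔ n ⊔
          (⨆ ξ ∈ rootSet t, rootSpace t ξ) := by
  have ht0 : t.toSubmodule ≤ rootSpace t 0 := hdecomp ▸ le_sup_left
  have hn0 : n ≤ rootSpace t 0 := fun v hv => ((hn v).mp hv).1
  have hJ : Submodule.span F ({(t₂ : g), (t₃ : g)} : Set g) ≤ t.toSubmodule :=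
    Submodule.span_le.mpr (Set.insert_subset_iff.mpr ⟨t₂.2, Set.singleton_subset_iff.mpr t₃.2⟩)
  have hpJ : ∀ ξ ∈ rootSet t, ∀ z ∈ rootSpace t ξ,
      p z ∈ Submodule.span F ({(t₂ : g), (t₃ : g)} : Set g) ⊔ n := by
    intro ξ hξ z hz
    have hpz0 : p z ∈ t.toSubmodule ⊔ n := by
      simpa [ξ.add_self_eq_zero, hdecomp] using hp.mem_rootSpace_add_self hcenter hz
    obtain ⟨τ, hτ, ν, hν, hpz⟩ := Submodule.mem_sup.mp hpz0
    have hνnil := hp.isNilpotent_ad ((hn ν).mp hν).2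
    have hατ : α ⟨τ, hτ⟩ = 0 := apply_eq_zero_of_forall_finrank_lt hroots h1 h2 h3 h4 h5 h6 hξ
      (hp.apply_self_eq_zero hz ξ.add_self_eq_zero hξ.2 hpz.symm (hn0 hν) hνnil)
      (fun _ hlt => hp.apply_eq_zero_of_finrank_lt (τ := ⟨τ, hτ⟩) hz hpz.symm hνnil hlt)
    exact hpz ▸ Submodule.add_mem_sup (coe_mem_span_pair_of_apply_eq_zero hspan hα hατ) hν
  intro x y hy
  have hx := mem_iSup_rootSpace hp (fun s s' => lie_eq_zero_of_mem_rootSpace_zero (ht0 s'.2) s)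
    htor1 htor2 htor3 hspan hα hβ hγ x
  refine Submodule.iSup_induction _ (motive := fun x => ⁅x, y⁆ ∈ _) hx ?_ (by simp) ?_
  · exact fun _ w hw => lie_mem_of_mem_rootSpace hp hJ hn0 hstd hpJ hw hy
  · intro a b ha hb
    rw [add_lie]
    exact add_mem ha hb

/-- Case A with `dim g_{α+γ} > dim g_{β+γ} = dim g_{α+β+γ}`:
`span{t2, t3} ⊕ n ⊕ ⊕_{ξ∈Δ} g_ξ` is an ideal of `g`. -/
theorem statement13
    {F : Type*} [Field F] [IsAlgClosed F] [CharP F 2]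
    {g : Type*} [LieRing g] [LieAlgebra F g] [FiniteDimensional F g]
    (p : g → g) (hp : IsTwoMap F p)
    (hcenter : LieAlgebra.center F g = ⊥)
    (t : LieSubalgebra F g) (hmax : IsMaxTorus F p t)
    (n : Submodule F g)
    (hn : ∀ x : g, x ∈ n ↔ x ∈ rootSpace t 0 ∧ IsTwoNilpotent p x)
    (hstd : ∀ x ∈ rootSpace t 0, ∀ y ∈ n, ⁅x, y⁆ ∈ n)
    (hdecomp : rootSpace t 0 = t.toSubmodule ⊔ n)
    (hdisj : Disjoint t.toSubmodule n)
    (hrank : ∀ s : LieSubalgebra F g, IsTorus F p s → Module.finrank F s ≤ 3)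
    (hdimt : Module.finrank F t = 3)
    (t₁ t₂ t₃ : t)
    (htor1 : p (t₁ : g) = (t₁ : g)) (htor2 : p (t₂ : g) = (t₂ : g))
    (htor3 : p (t₃ : g) = (t₃ : g))
    (hspan : Submodule.span F ({t₁, t₂, t₃} : Set t) = ⊤)
    (α β γ : Module.Dual F t)
    (hα : α t₁ = 1 ∧ α t₂ = 0 ∧ α t₃ = 0)
    (hβ : β t₁ = 0 ∧ β t₂ = 1 ∧ β t₃ = 0)
    (hγ : γ t₁ = 0 ∧ γ t₂ = 0 ∧ γ t₃ = 1)
    (hroots : rootSet t = ({α, β, γ, α + β, α + γ, β + γ, α + β + γ} :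
      Set (Module.Dual F t)))
    (h1 : Module.finrank F (rootSpace t α) = Module.finrank F (rootSpace t β))
    (h2 : Module.finrank F (rootSpace t β) = Module.finrank F (rootSpace t (α + β)))
    (h3 : Module.finrank F (rootSpace t γ) ≤ Module.finrank F (rootSpace t (α + β)))
    (h4 : Module.finrank F (rootSpace t (α + γ)) ≤ Module.finrank F (rootSpace t γ))
    (h5 : Module.finrank F (rootSpace t (β + γ)) <
      Module.finrank F (rootSpace t (α + γ)))
    (h6 : Module.finrank F (rootSpace t (β + γ)) =
      Module.finrank F (rootSpace t (α + β + γ))) :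
    ∀ x y : g,
      y ∈ Submodule.span F ({(t₂ : g), (t₃ : g)} : Set g) ⊔ n ⊔
          (⨆ ξ ∈ rootSet t, rootSpace t ξ) →
      ⁅x, y⁆ ∈ Submodule.span F ({(t₂ : g), (t₃ : g)} : Set g) ⊔ n ⊔
          (⨆ ξ ∈ rootSet t, rootSpace t ξ) :=
  statement13_general p hp hcenter t n hn hstd hdecomp t₁ t₂ t₃ htor1 htor2 htor3 hspan α β γ hα hβ
    hγ hroots h1 h2 h3 h4 h5 h6
end

section
/- Let g be a centerless Lie 2-algebra with MT(g) = 3, standard maximal torus t with toral basis {t1, t2, t3} and dual basis {α, β, γ} of t*, whose t-root set is Δ = {α, β, γ, α+β, α+γ, β+γ, α+β+γ}. Assume dim(g_α) = dim(g_β) = dim(g_γ) = dim(g_{α+β+γ}) ≥ dim(g_{α+β}) ≥ dim(g_{α+γ}) > dim(g_{β+γ}). Then I := span{t1, t2 + t3} ⊕ n ⊕ ⊕_{ξ∈Δ} g_ξ is an ideal of g. -/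
set_option maxHeartbeats 4000000 in
/-- Case B with `dim g_{α+γ} > dim g_{β+γ}`:
`span{t1, t2 + t3} ⊕ n ⊕ ⊕_{ξ∈Δ} g_ξ` is an ideal of `g`. -/
theorem statement16
    {F : Type*} [Field F] [IsAlgClosed F] [CharP F 2]
    {g : Type*} [LieRing g] [LieAlgebra F g] [FiniteDimensional F g]
    (p : g → g) (hp : IsTwoMap F p)
    (hcenter : LieAlgebra.center F g = ⊥)
    (t : LieSubalgebra F g) (hmax : IsMaxTorus F p t)
    (n : Submodule F g)
    (hn : ∀ x : g, x ∈ n ↔ x ∈ rootSpace t 0 ∧ IsTwoNilpotent p x)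
    (hstd : ∀ x ∈ rootSpace t 0, ∀ y ∈ n, ⁅x, y⁆ ∈ n)
    (hdecomp : rootSpace t 0 = t.toSubmodule ⊔ n)
    (hdisj : Disjoint t.toSubmodule n)
    (hrank : ∀ s : LieSubalgebra F g, IsTorus F p s → Module.finrank F s ≤ 3)
    (hdimt : Module.finrank F t = 3)
    (t₁ t₂ t₃ : t)
    (htor1 : p (t₁ : g) = (t₁ : g)) (htor2 : p (t₂ : g) = (t₂ : g))
    (htor3 : p (t₃ : g) = (t₃ : g))
    (hspan : Submodule.span F ({t₁, t₂, t₃} : Set t) = ⊤)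
    (α β γ : Module.Dual F t)
    (hα : α t₁ = 1 ∧ α t₂ = 0 ∧ α t₃ = 0)
    (hβ : β t₁ = 0 ∧ β t₂ = 1 ∧ β t₃ = 0)
    (hγ : γ t₁ = 0 ∧ γ t₂ = 0 ∧ γ t₃ = 1)
    (hroots : rootSet t = ({α, β, γ, α + β, α + γ, β + γ, α + β + γ} :
      Set (Module.Dual F t)))
    (h1 : Module.finrank F (rootSpace t α) = Module.finrank F (rootSpace t β))
    (h2 : Module.finrank F (rootSpace t β) = Module.finrank F (rootSpace t γ))
    (h3 : Module.finrank F (rootSpace t γ) = Module.finrank F (rootSpace t (α + β + γ)))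
    (h4 : Module.finrank F (rootSpace t (α + β)) ≤
      Module.finrank F (rootSpace t (α + β + γ)))
    (h5 : Module.finrank F (rootSpace t (α + γ)) ≤ Module.finrank F (rootSpace t (α + β)))
    (h6 : Module.finrank F (rootSpace t (β + γ)) <
      Module.finrank F (rootSpace t (α + γ))) :
    ∀ x y : g,
      y ∈ Submodule.span F ({(t₁ : g), (t₂ : g) + (t₃ : g)} : Set g) ⊔ n ⊔
          (⨆ ξ ∈ rootSet t, rootSpace t ξ) →
      ⁅x, y⁆ ∈ Submodule.span F ({(t₁ : g), (t₂ : g) + (t₃ : g)} : Set g) ⊔ n ⊔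
          (⨆ ξ ∈ rootSet t, rootSpace t ξ) := by
  intro x0 y0 hy0
  set Isub := Submodule.span F ({(t₁ : g), (t₂ : g) + (t₃ : g)} : Set g) ⊔ n ⊔
      (⨆ ξ ∈ rootSet t, rootSpace t ξ) with hIsubdef
  -- basic facts
  have memrs : ∀ (lam : Module.Dual F t) (v : g),
      v ∈ rootSpace t lam ↔ ∀ s : t, ⁅(s : g), v⁆ = lam s • v := fun _ _ => Iff.rfl
  have h2F : (2 : F) = 0 := by
    have := CharP.cast_eq_zero F 2
    exact_mod_cast this
  have hdual : ∀ u : Module.Dual F t, u + u = 0 := by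
    intro u
    rw [← two_smul F u, h2F, zero_smul]
  have hL0 : ∀ (μ ν : Module.Dual F t) (a b : g), a ∈ rootSpace t μ → b ∈ rootSpace t ν →
      ⁅a, b⁆ ∈ rootSpace t (μ + ν) := by
    intro μ ν a b ha hb
    rw [memrs]
    intro s
    rw [leibniz_lie, (memrs μ a).mp ha s, (memrs ν b).mp hb s, smul_lie, lie_smul,
      LinearMap.add_apply, add_smul]
  have ht_sub : t.toSubmodule ≤ rootSpace t 0 := hdecomp ▸ le_sup_left
  have hn_sub : n ≤ rootSpace t 0 := hdecomp ▸ le_sup_right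
  have h0mem : ∀ v ∈ rootSpace t 0, ∀ s : t, ⁅(s : g), v⁆ = 0 := by
    intro v hv s
    have := (memrs 0 v).mp hv s
    simpa using this
  have htt : ∀ s s' : t, ⁅(s : g), (s' : g)⁆ = 0 := fun s s' =>
    h0mem _ (ht_sub s'.2) s
  -- powers of ad
  have hadp : ∀ (w : g) (k : ℕ),
      (LieAlgebra.ad F g (p^[k] w)) = (LieAlgebra.ad F g w) ^ (2 ^ k) := by
    intro w k
    induction k with
    | zero => simp
    | succ k ih =>
      rw [Function.iterate_succ_apply']
      have hsq : LieAlgebra.ad F g (p (p^[k] w)) = (LieAlgebra.ad F g (p^[k] w)) ^ 2 := by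
        ext v
        simp only [LieAlgebra.ad_apply, pow_two, Module.End.mul_apply]
        exact hp.ad_pow _ _
      rw [hsq, ih, ← pow_mul, ← pow_succ]
  have hnilad : ∀ m ∈ n, ∃ K : ℕ, (LieAlgebra.ad F g m) ^ (2 ^ K) = 0 := by
    intro m hm
    obtain ⟨K, hK⟩ := ((hn m).mp hm).2
    refine ⟨K, ?_⟩
    rw [← hadp, hK]
    ext v
    simp
  have hpz0 : ∀ (ξ : Module.Dual F t) (z : g), z ∈ rootSpace t ξ → p z ∈ rootSpace t 0 := by
    intro ξ z hz
    rw [memrs]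
    intro s
    have h2' : ⁅p z, (s : g)⁆ = 0 := by
      rw [hp.ad_pow]
      have : ⁅z, (s : g)⁆ = -(ξ s • z) := by
        rw [← lie_skew, (memrs ξ z).mp hz s]
      rw [this]
      simp
    have : ⁅(s : g), p z⁆ = -⁅p z, (s : g)⁆ := by rw [lie_skew]
    rw [this, h2']
    simp
  -- T1 : for z in g_ξ with ξ a root, the toral part h' of p z satisfies ξ(h') = 0.
  have hT1 : ∀ (ξ : Module.Dual F t), ξ ∈ rootSet t → ∀ z ∈ rootSpace t ξ,
      ∀ (h' m' : g) (hh : h' ∈ t.toSubmodule), m' ∈ n → p z = h' + m' →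
      ξ ⟨h', hh⟩ = 0 := by
    intro ξ hξ z hz h' m' hh hm heq
    by_contra hc
    set V := rootSpace t ξ with hVdef
    have hzmap : ∀ v ∈ V, ⁅z, v⁆ ∈ rootSpace t 0 := by
      intro v hv
      have := hL0 ξ ξ z v hz hv
      rwa [hdual ξ] at this
    have hzmap2 : ∀ u ∈ rootSpace t 0, ⁅z, u⁆ ∈ V := by
      intro u hu
      have := hL0 ξ 0 z u hz hu
      rwa [add_zero] at this
    have hm'map : ∀ v ∈ V, ⁅m', v⁆ ∈ V := by
      intro v hv
      have := hL0 0 ξ m' v (hn_sub hm) hv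
      rwa [zero_add] at this
    set N : Module.End F V := LinearMap.restrict
      ((LieAlgebra.ad F g z) * (LieAlgebra.ad F g z))
      (fun v hv => by
        simpa only [Module.End.mul_apply, LieAlgebra.ad_apply] using
          hzmap2 _ (hzmap v hv)) with hNdef
    have hNapp : ∀ v : V, (N v : g) = ⁅z, ⁅z, (v : g)⁆⁆ := by
      intro v
      rw [hNdef, LinearMap.restrict_coe_apply]
      simp [Module.End.mul_apply]
    set N₂ : Module.End F V := LinearMap.restrict (LieAlgebra.ad F g m')
      (fun v hv => by simpa only [LieAlgebra.ad_apply] using hm'map v hv) with hN₂def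
    have hN₂app : ∀ v : V, (N₂ v : g) = ⁅m', (v : g)⁆ := by
      intro v
      rw [hN₂def, LinearMap.restrict_coe_apply]
      simp
    have hNdecomp : N = ξ ⟨h', hh⟩ • 1 + N₂ := by
      apply LinearMap.ext
      intro v
      apply Subtype.ext
      rw [hNapp, ← hp.ad_pow, heq, add_lie]
      have hh' : ⁅h', (v : g)⁆ = ξ ⟨h', hh⟩ • (v : g) := (memrs ξ (v : g)).mp v.2 ⟨h', hh⟩
      rw [hh']
      simp only [LinearMap.add_apply, LinearMap.smul_apply, Module.End.one_apply,
        Submodule.coe_add, SetLike.val_smul, hN₂app]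
    obtain ⟨K, hK⟩ := hnilad m' hm
    have hN₂pow : ∀ (j : ℕ) (v : V), ((N₂ ^ j) v : g) = ((LieAlgebra.ad F g m') ^ j) (v : g) := by
      intro j
      induction j with
      | zero => intro v; simp
      | succ j ih =>
        intro v
        rw [pow_succ, Module.End.mul_apply, ih, pow_succ, Module.End.mul_apply, hN₂app, LieAlgebra.ad_apply]
    have hN₂nil : N₂ ^ (2 ^ K) = 0 := by
      apply LinearMap.ext
      intro v
      apply Subtype.ext
      rw [hN₂pow, hK]
      simp
    have hcu : IsUnit (ξ ⟨h', hh⟩ • (1 : Module.End F V)) := by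
      rw [← Algebra.algebraMap_eq_smul_one]
      exact (IsUnit.mk0 _ hc).map (algebraMap F (Module.End F V))
    have hNunit : IsUnit N := by
      rw [hNdecomp]
      exact IsNilpotent.isUnit_add_left_of_commute ⟨2 ^ K, hN₂nil⟩ hcu
        ((Commute.one_right N₂).smul_right _)
    -- N is nilpotent
    have hstep : ∀ u ∈ rootSpace t 0, ⁅z, ⁅z, u⁆⁆ = ⁅m', u⁆ := by
      intro u hu
      rw [← hp.ad_pow, heq, add_lie]
      have : ⁅h', u⁆ = 0 := h0mem u hu ⟨h', hh⟩
      rw [this, zero_add]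
    have hWmem : ∀ (j : ℕ) (u : g), u ∈ rootSpace t 0 →
        ((LieAlgebra.ad F g m') ^ j) u ∈ rootSpace t 0 := by
      intro j
      induction j with
      | zero => intro u hu; simpa using hu
      | succ j ih =>
        intro u hu
        rw [pow_succ, Module.End.mul_apply]
        apply ih
        have := hL0 0 0 m' u (hn_sub hm) hu
        simpa using this
    have hNpow : ∀ (j : ℕ) (v : V),
        ((N ^ (j + 1)) v : g) = ⁅z, ((LieAlgebra.ad F g m') ^ j) ⁅z, (v : g)⁆⁆ := by
      intro j
      induction j with
      | zero => intro v; rw [pow_one, hNapp]; simp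
      | succ j ih =>
        intro v
        rw [pow_succ', Module.End.mul_apply, hNapp]
        have hin : ((N ^ (j + 1)) v : g) = ⁅z, ((LieAlgebra.ad F g m') ^ j) ⁅z, (v : g)⁆⁆ := ih v
        rw [hin]
        have hWj : ((LieAlgebra.ad F g m') ^ j) ⁅z, (v : g)⁆ ∈ rootSpace t 0 :=
          hWmem j _ (hzmap (v : g) v.2)
        rw [hstep _ hWj]
        rw [pow_succ', Module.End.mul_apply]
        simp
    have hNnil : N ^ (2 ^ K + 1) = 0 := by
      apply LinearMap.ext
      intro v
      apply Subtype.ext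
      rw [hNpow, hK]
      simp
    have hzero : IsUnit ((0 : Module.End F V)) := hNnil ▸ hNunit.pow (2 ^ K + 1)
    rw [isUnit_zero_iff] at hzero
    obtain ⟨v, hvV, hvne⟩ := (Submodule.ne_bot_iff _).mp hξ.2
    apply hvne
    have h10 : ((0 : Module.End F V) ⟨v, hvV⟩) = ((1 : Module.End F V) ⟨v, hvV⟩) := by
      rw [hzero]
    simp only [LinearMap.zero_apply, Module.End.one_apply] at h10
    exact Subtype.ext_iff.mp h10.symm
  -- T2 : rank argument
  have hT2 : ∀ (ξ μ ν : Module.Dual F t), μ + ξ = ν →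
      Module.finrank F (rootSpace t ν) < Module.finrank F (rootSpace t μ) →
      ∀ z ∈ rootSpace t ξ, ∀ (h' m' : g) (hh : h' ∈ t.toSubmodule), m' ∈ n →
      p z = h' + m' → μ ⟨h', hh⟩ = 0 := by
    intro ξ μ ν hν hdim z hz h' m' hh hm heq
    by_contra hc
    set V := rootSpace t μ with hVdef
    set W := rootSpace t ν with hWdef
    have hBmap : ∀ v ∈ V, ⁅z, v⁆ ∈ W := by
      intro v hv
      have := hL0 ξ μ z v hz hv
      rw [add_comm] at this
      rwa [hν] at this
    have hAmap : ∀ w ∈ W, ⁅z, w⁆ ∈ V := by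
      intro w hw
      have h1 := hL0 ξ ν z w hz hw
      have e : ξ + ν = μ := by
        rw [← hν]
        have e2 : ξ + (μ + ξ) = (ξ + ξ) + μ := by abel
        rw [e2, hdual, zero_add]
      rwa [e] at h1
    have hm'map : ∀ v ∈ V, ⁅m', v⁆ ∈ V := by
      intro v hv
      have := hL0 0 μ m' v (hn_sub hm) hv
      rwa [zero_add] at this
    set B : V →ₗ[F] W := LinearMap.restrict (LieAlgebra.ad F g z)
      (fun v hv => by simpa only [LieAlgebra.ad_apply] using hBmap v hv) with hBdef
    set A : W →ₗ[F] V := LinearMap.restrict (LieAlgebra.ad F g z)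
      (fun w hw => by simpa only [LieAlgebra.ad_apply] using hAmap w hw) with hAdef
    set N : Module.End F V := A ∘ₗ B with hNdef
    have hNapp : ∀ v : V, (N v : g) = ⁅z, ⁅z, (v : g)⁆⁆ := by
      intro v
      rw [hNdef, LinearMap.comp_apply, hAdef, LinearMap.restrict_coe_apply, hBdef,
        LinearMap.restrict_coe_apply]
      simp
    set N₂ : Module.End F V := LinearMap.restrict (LieAlgebra.ad F g m')
      (fun v hv => by simpa only [LieAlgebra.ad_apply] using hm'map v hv) with hN₂def
    have hN₂app : ∀ v : V, (N₂ v : g) = ⁅m', (v : g)⁆ := by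
      intro v
      rw [hN₂def, LinearMap.restrict_coe_apply]
      simp
    have hNdecomp : N = μ ⟨h', hh⟩ • 1 + N₂ := by
      apply LinearMap.ext
      intro v
      apply Subtype.ext
      rw [hNapp, ← hp.ad_pow, heq, add_lie]
      have hh' : ⁅h', (v : g)⁆ = μ ⟨h', hh⟩ • (v : g) := (memrs μ (v : g)).mp v.2 ⟨h', hh⟩
      rw [hh']
      simp only [LinearMap.add_apply, LinearMap.smul_apply, Module.End.one_apply,
        Submodule.coe_add, SetLike.val_smul, hN₂app]
    obtain ⟨K, hK⟩ := hnilad m' hm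
    have hN₂pow : ∀ (j : ℕ) (v : V), ((N₂ ^ j) v : g) = ((LieAlgebra.ad F g m') ^ j) (v : g) := by
      intro j
      induction j with
      | zero => intro v; simp
      | succ j ih =>
        intro v
        rw [pow_succ, Module.End.mul_apply, ih, pow_succ, Module.End.mul_apply, hN₂app, LieAlgebra.ad_apply]
    have hN₂nil : N₂ ^ (2 ^ K) = 0 := by
      apply LinearMap.ext
      intro v
      apply Subtype.ext
      rw [hN₂pow, hK]
      simp
    have hcu : IsUnit (μ ⟨h', hh⟩ • (1 : Module.End F V)) := by
      rw [← Algebra.algebraMap_eq_smul_one]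
      exact (IsUnit.mk0 _ hc).map (algebraMap F (Module.End F V))
    have hNunit : IsUnit N := by
      rw [hNdecomp]
      exact IsNilpotent.isUnit_add_left_of_commute ⟨2 ^ K, hN₂nil⟩ hcu
        ((Commute.one_right N₂).smul_right _)
    have hbij := (Module.End.isUnit_iff N).mp hNunit
    have hAsurj : Function.Surjective A := by
      intro v
      obtain ⟨u, hu⟩ := hbij.surjective v
      exact ⟨B u, hu⟩
    have hle : Module.finrank F V ≤ Module.finrank F W := by
      have h1 : LinearMap.range A = ⊤ := LinearMap.range_eq_top.mpr hAsurj
      have h2 := LinearMap.finrank_range_le A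
      rw [h1, finrank_top] at h2
      exact h2
    omega
  -- dimension chain: dim g_{β+γ} < dim g_{α+β+γ}
  have hElt : Module.finrank F (rootSpace t (β + γ)) <
      Module.finrank F (rootSpace t (α + β + γ)) := lt_of_lt_of_le h6 (le_trans h5 h4)
  -- key : for every root ξ and z ∈ g_ξ, the toral part h' of p z satisfies (β+γ)(h') = 0
  have key7 : ∀ (ξ : Module.Dual F t), ξ ∈ rootSet t → ∀ z ∈ rootSpace t ξ,
      ∀ (h' m' : g) (hh : h' ∈ t.toSubmodule), m' ∈ n → p z = h' + m' →
      β ⟨h', hh⟩ + γ ⟨h', hh⟩ = 0 := by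
    intro ξ hξ z hz h' m' hh hm heq
    have hξ' := hξ
    rw [hroots] at hξ'
    simp only [Set.mem_insert_iff, Set.mem_singleton_iff] at hξ'
    rcases hξ' with h | h | h | h | h | h | h <;> rw [h] at hz hξ
    · -- ξ = α
      have e1 := hT1 α hξ z hz h' m' hh hm heq
      have e2 := hT2 α (α + β + γ) (β + γ)
        (by
          have e3 : (α + β + γ) + α = (α + α) + (β + γ) := by abel
          rw [e3, hdual, zero_add]) hElt z hz h' m' hh hm heq
      simp only [LinearMap.add_apply] at e2 ⊢
      linear_combination e2 - e1
    · -- ξ = β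
      have e1 := hT1 β hξ z hz h' m' hh hm heq
      have e2 := hT2 β γ (β + γ) (add_comm γ β)
        (by rw [h3]; exact hElt) z hz h' m' hh hm heq
      linear_combination e1 + e2
    · -- ξ = γ
      have e1 := hT1 γ hξ z hz h' m' hh hm heq
      have e2 := hT2 γ β (β + γ) rfl
        (by rw [h2, h3]; exact hElt) z hz h' m' hh hm heq
      linear_combination e1 + e2
    · -- ξ = α + β
      have e1 := hT1 (α + β) hξ z hz h' m' hh hm heq
      have e2 := hT2 (α + β) (α + γ) (β + γ)
        (by
          have e3 : (α + γ) + (α + β) = (α + α) + (β + γ) := by abel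
          rw [e3, hdual, zero_add]) h6 z hz h' m' hh hm heq
      simp only [LinearMap.add_apply] at e1 e2 ⊢
      linear_combination e1 + e2 - α ⟨h', hh⟩ * h2F
    · -- ξ = α + γ
      have e1 := hT1 (α + γ) hξ z hz h' m' hh hm heq
      have e2 := hT2 (α + γ) (α + β) (β + γ)
        (by
          have e3 : (α + β) + (α + γ) = (α + α) + (β + γ) := by abel
          rw [e3, hdual, zero_add]) (lt_of_lt_of_le h6 h5) z hz h' m' hh hm heq
      simp only [LinearMap.add_apply] at e1 e2 ⊢
      linear_combination e1 + e2 - α ⟨h', hh⟩ * h2F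
    · -- ξ = β + γ
      have e1 := hT1 (β + γ) hξ z hz h' m' hh hm heq
      simp only [LinearMap.add_apply] at e1
      linear_combination e1
    · -- ξ = α + β + γ
      have e1 := hT1 (α + β + γ) hξ z hz h' m' hh hm heq
      have e2 := hT2 (α + β + γ) α (β + γ)
        (by
          have e3 : α + (α + β + γ) = (α + α) + (β + γ) := by abel
          rw [e3, hdual, zero_add])
        (by rw [h1, h2, h3]; exact hElt) z hz h' m' hh hm heq
      simp only [LinearMap.add_apply] at e1 ⊢
      linear_combination e1 - e2
  -- brackets within a root space land in span{t₁, t₂+t₃} ⊔ n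
  have hbrk : ∀ (ξ : Module.Dual F t), ξ ∈ rootSet t → ∀ a ∈ rootSpace t ξ,
      ∀ b ∈ rootSpace t ξ,
      ⁅a, b⁆ ∈ (Submodule.span F ({(t₁ : g), (t₂ : g) + (t₃ : g)} : Set g) ⊔ n) := by
    intro ξ hξ a ha b hb
    have hmem1 : p (a + b) ∈ t.toSubmodule ⊔ n := hdecomp ▸ hpz0 ξ _ (add_mem ha hb)
    have hmem2 : p a ∈ t.toSubmodule ⊔ n := hdecomp ▸ hpz0 ξ a ha
    have hmem3 : p b ∈ t.toSubmodule ⊔ n := hdecomp ▸ hpz0 ξ b hb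
    obtain ⟨h₁, hh₁, m₁, hm₁, heq₁⟩ := Submodule.mem_sup.mp hmem1
    obtain ⟨h₂, hh₂, m₂, hm₂, heq₂⟩ := Submodule.mem_sup.mp hmem2
    obtain ⟨h₃, hh₃, m₃, hm₃, heq₃⟩ := Submodule.mem_sup.mp hmem3
    have k1 := key7 ξ hξ (a + b) (add_mem ha hb) h₁ m₁ hh₁ hm₁ heq₁.symm
    have k2 := key7 ξ hξ a ha h₂ m₂ hh₂ hm₂ heq₂.symm
    have k3 := key7 ξ hξ b hb h₃ m₃ hh₃ hm₃ heq₃.symm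
    set w : t := ⟨h₁, hh₁⟩ - ⟨h₂, hh₂⟩ - ⟨h₃, hh₃⟩ with hwdef
    have hwsum : β w + γ w = 0 := by
      rw [hwdef]
      simp only [map_sub]
      linear_combination k1 - k2 - k3
    have hwmem : w ∈ Submodule.span F ({t₁, t₂, t₃} : Set t) := by rw [hspan]; trivial
    rw [show ({t₁, t₂, t₃} : Set t) = insert t₁ ({t₂, t₃} : Set t) from rfl] at hwmem
    obtain ⟨ac, z', hz', hwz⟩ := Submodule.mem_span_insert.mp hwmem
    obtain ⟨bc, cc, hbc⟩ := Submodule.mem_span_pair.mp hz'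
    have hwrep : w = ac • t₁ + bc • t₂ + cc • t₃ := by
      rw [hwz, ← hbc]
      abel
    have hβw : β w = bc := by
      rw [hwrep]
      simp [map_add, map_smul, hβ.1, hβ.2.1, hβ.2.2, smul_eq_mul]
    have hγw : γ w = cc := by
      rw [hwrep]
      simp [map_add, map_smul, hγ.1, hγ.2.1, hγ.2.2, smul_eq_mul]
    have hcb : cc = bc := by
      have hsum : bc + cc = 0 := by rw [← hβw, ← hγw]; exact hwsum
      linear_combination hsum - bc * h2F
    have hwg : (w : g) ∈ Submodule.span F ({(t₁ : g), (t₂ : g) + (t₃ : g)} : Set g) := by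
      apply Submodule.mem_span_pair.mpr
      refine ⟨ac, bc, ?_⟩
      rw [hwrep, hcb]
      push_cast
      simp only [smul_add]
      abel
    have hlie : ⁅a, b⁆ = (w : g) + (m₁ - m₂ - m₃) := by
      have h0 : ⁅a, b⁆ = p (a + b) - p a - p b := by rw [hp.add_pow]; abel
      have hwcoe : (w : g) = h₁ - h₂ - h₃ := by rw [hwdef]; push_cast; ring_nf
      rw [h0, ← heq₁, ← heq₂, ← heq₃, hwcoe]
      abel
    rw [hlie]
    exact Submodule.add_mem _ (Submodule.mem_sup_left hwg)
      (Submodule.mem_sup_right (sub_mem (sub_mem hm₁ hm₂) hm₃))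
  -- decomposition of g into joint eigenspaces
  set S : Submodule F g := rootSpace t 0 ⊔ (⨆ ξ ∈ rootSet t, rootSpace t ξ) with hSdef
  have hidem : ∀ (s : t), p (s : g) = (s : g) → ∀ v : g,
      ⁅(s : g), ⁅(s : g), v⁆⁆ = ⁅(s : g), v⁆ := by
    intro s hs v
    rw [← hp.ad_pow, hs]
  have hcomm : ∀ (s s' : t) (v : g), ⁅(s : g), ⁅(s' : g), v⁆⁆ = ⁅(s' : g), ⁅(s : g), v⁆⁆ := by
    intro s s' v
    rw [leibniz_lie, htt s s', zero_lie, zero_add]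
  have hrs : ∀ (ε1 ε2 ε3 : F) (v : g), ⁅(t₁ : g), v⁆ = ε1 • v → ⁅(t₂ : g), v⁆ = ε2 • v →
      ⁅(t₃ : g), v⁆ = ε3 • v → v ∈ rootSpace t (ε1 • α + ε2 • β + ε3 • γ) := by
    intro ε1 ε2 ε3 v e1 e2 e3
    rw [memrs]
    intro s
    have hsmem : s ∈ Submodule.span F ({t₁, t₂, t₃} : Set t) := by rw [hspan]; trivial
    refine Submodule.span_induction
      (p := fun (w : t) _ => ⁅(w : g), v⁆ = (ε1 • α + ε2 • β + ε3 • γ) w • v) ?_ ?_ ?_ ?_ hsmem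
    · intro w hw
      simp only [Set.mem_insert_iff, Set.mem_singleton_iff] at hw
      rcases hw with rfl | rfl | rfl
      · simp only [LinearMap.add_apply, LinearMap.smul_apply, hα.1, hβ.1, hγ.1,
          smul_eq_mul, mul_one, mul_zero, add_zero, zero_add, e1]
      · simp only [LinearMap.add_apply, LinearMap.smul_apply, hα.2.1, hβ.2.1, hγ.2.1,
          smul_eq_mul, mul_one, mul_zero, add_zero, zero_add, e2]
      · simp only [LinearMap.add_apply, LinearMap.smul_apply, hα.2.2, hβ.2.2, hγ.2.2,
          smul_eq_mul, mul_one, mul_zero, add_zero, zero_add, e3]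
    · simp
    · intro w w' _ _ hw hw'
      have hc : ((w + w' : t) : g) = (w : g) + (w' : g) := rfl
      rw [hc, add_lie, hw, hw', map_add, add_smul]
    · intro c w _ hw
      have hc : ((c • w : t) : g) = c • (w : g) := rfl
      rw [hc, smul_lie, hw, map_smul, smul_eq_mul, mul_smul]
  have hmemS : ∀ (ε1 ε2 ε3 : F) (v : g), ⁅(t₁ : g), v⁆ = ε1 • v → ⁅(t₂ : g), v⁆ = ε2 • v →
      ⁅(t₃ : g), v⁆ = ε3 • v → v ∈ S := by
    intro ε1 ε2 ε3 v e1 e2 e3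
    have hv := hrs ε1 ε2 ε3 v e1 e2 e3
    by_cases h0 : (ε1 • α + ε2 • β + ε3 • γ) = 0
    · rw [h0] at hv
      exact Submodule.mem_sup_left hv
    by_cases hbot : rootSpace t (ε1 • α + ε2 • β + ε3 • γ) = ⊥
    · rw [hbot, Submodule.mem_bot] at hv
      rw [hv]
      exact zero_mem _
    · exact Submodule.mem_sup_right
        (Submodule.mem_iSup_of_mem _ (Submodule.mem_iSup_of_mem ⟨h0, hbot⟩ hv))
  have hdecompS : ∀ v : g, v ∈ S := by
    have dec3 : ∀ (ε1 ε2 : F) (v : g), ⁅(t₁ : g), v⁆ = ε1 • v → ⁅(t₂ : g), v⁆ = ε2 • v →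
        v ∈ S := by
      intro ε1 ε2 v e1 e2
      have e3u : ⁅(t₃ : g), ⁅(t₃ : g), v⁆⁆ = (1 : F) • ⁅(t₃ : g), v⁆ := by
        rw [one_smul]; exact hidem t₃ htor3 v
      have e1u : ⁅(t₁ : g), ⁅(t₃ : g), v⁆⁆ = ε1 • ⁅(t₃ : g), v⁆ := by
        rw [hcomm t₁ t₃ v, e1, lie_smul]
      have e2u : ⁅(t₂ : g), ⁅(t₃ : g), v⁆⁆ = ε2 • ⁅(t₃ : g), v⁆ := by
        rw [hcomm t₂ t₃ v, e2, lie_smul]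
      have e1w : ⁅(t₁ : g), v - ⁅(t₃ : g), v⁆⁆ = ε1 • (v - ⁅(t₃ : g), v⁆) := by
        rw [lie_sub, e1, e1u, smul_sub]
      have e2w : ⁅(t₂ : g), v - ⁅(t₃ : g), v⁆⁆ = ε2 • (v - ⁅(t₃ : g), v⁆) := by
        rw [lie_sub, e2, e2u, smul_sub]
      have e3w : ⁅(t₃ : g), v - ⁅(t₃ : g), v⁆⁆ = (0 : F) • (v - ⁅(t₃ : g), v⁆) := by
        rw [lie_sub, hidem t₃ htor3 v, sub_self, zero_smul]
      have hsplit : v = ⁅(t₃ : g), v⁆ + (v - ⁅(t₃ : g), v⁆) := by abel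
      rw [hsplit]
      exact add_mem (hmemS ε1 ε2 1 _ e1u e2u e3u) (hmemS ε1 ε2 0 _ e1w e2w e3w)
    have dec2 : ∀ (ε1 : F) (v : g), ⁅(t₁ : g), v⁆ = ε1 • v → v ∈ S := by
      intro ε1 v e1
      have e2u : ⁅(t₂ : g), ⁅(t₂ : g), v⁆⁆ = (1 : F) • ⁅(t₂ : g), v⁆ := by
        rw [one_smul]; exact hidem t₂ htor2 v
      have e1u : ⁅(t₁ : g), ⁅(t₂ : g), v⁆⁆ = ε1 • ⁅(t₂ : g), v⁆ := by
        rw [hcomm t₁ t₂ v, e1, lie_smul]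
      have e1w : ⁅(t₁ : g), v - ⁅(t₂ : g), v⁆⁆ = ε1 • (v - ⁅(t₂ : g), v⁆) := by
        rw [lie_sub, e1, e1u, smul_sub]
      have e2w : ⁅(t₂ : g), v - ⁅(t₂ : g), v⁆⁆ = (0 : F) • (v - ⁅(t₂ : g), v⁆) := by
        rw [lie_sub, hidem t₂ htor2 v, sub_self, zero_smul]
      have hsplit : v = ⁅(t₂ : g), v⁆ + (v - ⁅(t₂ : g), v⁆) := by abel
      rw [hsplit]
      exact add_mem (dec3 ε1 1 _ e1u e2u) (dec3 ε1 0 _ e1w e2w)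
    intro v
    have e1u : ⁅(t₁ : g), ⁅(t₁ : g), v⁆⁆ = (1 : F) • ⁅(t₁ : g), v⁆ := by
      rw [one_smul]; exact hidem t₁ htor1 v
    have e1w : ⁅(t₁ : g), v - ⁅(t₁ : g), v⁆⁆ = (0 : F) • (v - ⁅(t₁ : g), v⁆) := by
      rw [lie_sub, hidem t₁ htor1 v, sub_self, zero_smul]
    have hsplit : v = ⁅(t₁ : g), v⁆ + (v - ⁅(t₁ : g), v⁆) := by abel
    rw [hsplit]
    exact add_mem (dec2 1 _ e1u) (dec2 0 _ e1w)
  -- final assembly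
  have flip : ∀ a b : g, ⁅a, b⁆ ∈ Isub → ⁅b, a⁆ ∈ Isub := by
    intro a b h
    have : ⁅b, a⁆ = -⁅a, b⁆ := by rw [← lie_skew]
    rw [this]
    exact neg_mem h
  have hspanle : ∀ η, η ∈ rootSet t → rootSpace t η ≤ Isub := by
    intro η hη
    refine le_trans ?_ le_sup_right
    exact le_iSup₂ (f := fun ξ (_ : ξ ∈ rootSet t) => rootSpace t ξ) η hη
  have hnle : n ≤ Isub := le_trans le_sup_right le_sup_left
  have hbrT : ∀ (s : t) (v : g), ⁅v, (s : g)⁆ ∈ Isub := by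
    intro s v
    apply flip
    have hle : S ≤ Submodule.comap (LieAlgebra.ad F g (s : g) : g →ₗ[F] g) Isub := by
      apply sup_le
      · intro u hu
        simp only [Submodule.mem_comap, LieAlgebra.ad_apply]
        rw [h0mem u hu s]
        exact zero_mem _
      · apply iSup_le
        intro η
        apply iSup_le
        intro hη
        intro u hu
        simp only [Submodule.mem_comap, LieAlgebra.ad_apply]
        rw [(memrs η u).mp hu s]
        exact hspanle η hη (Submodule.smul_mem _ _ hu)
    have := hle (hdecompS v)
    simpa only [Submodule.mem_comap, LieAlgebra.ad_apply] using this
  have hbrN : ∀ (m : g), m ∈ n → ∀ v : g, ⁅v, m⁆ ∈ Isub := by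
    intro m hm v
    apply flip
    have hle : S ≤ Submodule.comap (LieAlgebra.ad F g m : g →ₗ[F] g) Isub := by
      apply sup_le
      · intro u hu
        simp only [Submodule.mem_comap, LieAlgebra.ad_apply]
        have h1 : ⁅u, m⁆ ∈ n := hstd u hu m hm
        have h2' : ⁅m, u⁆ = -⁅u, m⁆ := by rw [← lie_skew]
        rw [h2']
        exact hnle (neg_mem h1)
      · apply iSup_le
        intro η
        apply iSup_le
        intro hη
        intro u hu
        simp only [Submodule.mem_comap, LieAlgebra.ad_apply]
        have := hL0 0 η m u (hn_sub hm) hu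
        rw [zero_add] at this
        exact hspanle η hη this
    have := hle (hdecompS v)
    simpa only [Submodule.mem_comap, LieAlgebra.ad_apply] using this
  have hbrR : ∀ (ξ : Module.Dual F t), ξ ∈ rootSet t → ∀ b ∈ rootSpace t ξ,
      ∀ v : g, ⁅v, b⁆ ∈ Isub := by
    intro ξ hξ b hb v
    apply flip
    have hle : S ≤ Submodule.comap (LieAlgebra.ad F g b : g →ₗ[F] g) Isub := by
      apply sup_le
      · intro u hu
        simp only [Submodule.mem_comap, LieAlgebra.ad_apply]
        have := hL0 ξ 0 b u hb hu
        rw [add_zero] at this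
        exact hspanle ξ hξ this
      · apply iSup_le
        intro η
        apply iSup_le
        intro hη
        intro u hu
        simp only [Submodule.mem_comap, LieAlgebra.ad_apply]
        by_cases hcase : η = ξ
        · rw [hcase] at hu
          exact Submodule.mem_sup_left (hbrk ξ hξ b hb u hu)
        · have hmem := hL0 ξ η b u hb hu
          by_cases hbot : rootSpace t (ξ + η) = ⊥
          · rw [hbot, Submodule.mem_bot] at hmem
            rw [hmem]
            exact zero_mem _
          · have hne : ξ + η ≠ 0 := by
              intro h0
              apply hcase
              have e : (ξ + η) + ξ = η + (ξ + ξ) := by abel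
              rw [h0, hdual, zero_add, add_zero] at e
              exact e.symm
            exact hspanle (ξ + η) ⟨hne, hbot⟩ hmem
    have := hle (hdecompS v)
    simpa only [Submodule.mem_comap, LieAlgebra.ad_apply] using this
  have final : Isub ≤ Submodule.comap (LieAlgebra.ad F g x0 : g →ₗ[F] g) Isub := by
    apply sup_le
    apply sup_le
    · rw [Submodule.span_le]
      rintro yv hyv
      simp only [Set.mem_insert_iff, Set.mem_singleton_iff] at hyv
      rcases hyv with rfl | rfl
      · simp only [SetLike.mem_coe, Submodule.mem_comap, LieAlgebra.ad_apply]
        exact hbrT t₁ x0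
      · simp only [SetLike.mem_coe, Submodule.mem_comap, LieAlgebra.ad_apply]
        have hco : (t₂ : g) + (t₃ : g) = ((t₂ + t₃ : t) : g) := by push_cast; rfl
        rw [hco]
        exact hbrT (t₂ + t₃) x0
    · intro m hm
      simp only [Submodule.mem_comap, LieAlgebra.ad_apply]
      exact hbrN m hm x0
    · apply iSup_le
      intro ξ
      apply iSup_le
      intro hξ
      intro b hb
      simp only [Submodule.mem_comap, LieAlgebra.ad_apply]
      exact hbrR ξ hξ b hb x0
  have := final hy0
  simpa only [Submodule.mem_comap, LieAlgebra.ad_apply] using this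
end
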